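/- For odd e > 1 divisible by 3, the sum (3/e)·Σ_{3 | f, f | e} μ(e/f)·(2^(2f) − 2) is a nonnegative integer, i.e., e divides 3·Σ_{3|f|e} μ(e/f)·(2^(2f)−2). -/

import Mathlib

/-!
Writing `e = 3 m`, the sum is `W(64, m) - 2 W(1, m)` with `W(a, m) = ∑_{d ∣ m} μ(m/d) a^d`.
Divisibility by `m` is Gauss's congruence `m ∣ W(a, m)`: multiplicativity of `μ` reduces it to
`W(a, p^(k+1)) = a^(p^(k+1)) - a^(p^k)`, which Fermat's little theorem, lifted along `p`-th
powers, makes divisible by `p^(k+1)`. For nonnegativity, `W(1, m)` vanishes unless `m = 1`, and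
in `W(64, m)` the leading term `64^m` dominates the geometric sum of all the others.
-/

open ArithmeticFunction ArithmeticFunction.Moebius Finset

theorem Nat.Coprime.sum_divisors_mul_eq_sum_sum {M : Type*} [AddCommMonoid M] {m n : ℕ}
    (hmn : m.Coprime n) (f : ℕ → M) :
    ∑ d ∈ (m * n).divisors, f d = ∑ x ∈ m.divisors, ∑ y ∈ n.divisors, f (x * y) := by
  rw [hmn.divisors_mul, sum_map]
  exact (sum_attach _ fun p : ℕ × ℕ => f (p.1 * p.2)).trans (sum_product ..)

theorem Nat.filter_dvd_divisors_mul {k : ℕ} (hk : k ≠ 0) (m : ℕ) :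
    (k * m).divisors.filter (k ∣ ·) = m.divisors.map ⟨(k * ·), mul_right_injective₀ hk⟩ := by
  ext f
  simp only [mem_filter, Nat.mem_divisors, mem_map, Function.Embedding.coeFn_mk]
  constructor
  · rintro ⟨⟨hf, hm⟩, g, rfl⟩
    exact ⟨g, ⟨Nat.dvd_of_mul_dvd_mul_left (Nat.pos_of_ne_zero hk) hf, by simp_all⟩, rfl⟩
  · rintro ⟨g, ⟨hg, hm⟩, rfl⟩
    exact ⟨⟨Nat.mul_dvd_mul_left k hg, mul_ne_zero hk hm⟩, dvd_mul_right k g⟩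

theorem prime_pow_succ_dvd_pow_sub_pow {p : ℕ} (hp : p.Prime) (b : ℤ) (k : ℕ) :
    (p : ℤ) ^ (k + 1) ∣ b ^ p ^ (k + 1) - b ^ p ^ k := by
  have := dvd_sub_pow_of_dvd_sub (Int.ModEq.pow_prime_eq_self hp b).symm.dvd k
  rwa [← pow_mul, ← pow_succ'] at this

/-- For `a ≥ 0` this is the number of words of length `n` over an alphabet of `a` letters
that are not a proper power of a shorter word. -/
def aperiodicWordCount (a : ℤ) (n : ℕ) : ℤ :=
  ∑ d ∈ n.divisors, μ (n / d) * a ^ d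

theorem aperiodicWordCount_one_right (a : ℤ) : aperiodicWordCount a 1 = a := by
  simp [aperiodicWordCount]

theorem aperiodicWordCount_one_left (n : ℕ) :
    aperiodicWordCount 1 n = if n = 1 then 1 else 0 := by
  have h := congrArg (· n) moebius_mul_coe_zeta
  simp only [coe_mul_zeta_apply, one_apply] at h
  simp only [aperiodicWordCount, one_pow, mul_one, ← h]
  exact Nat.sum_div_divisors n μ

theorem aperiodicWordCount_prime_pow_succ {p : ℕ} (hp : p.Prime) (a : ℤ) (k : ℕ) :
    aperiodicWordCount a (p ^ (k + 1)) = a ^ p ^ (k + 1) - a ^ p ^ k := by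
  rw [aperiodicWordCount, Nat.sum_divisors_prime_pow hp, sum_range_succ, sum_range_succ,
    sum_eq_zero fun i hi => ?_]
  · rw [Nat.pow_div k.le_succ hp.pos, Nat.div_self (pow_pos hp.pos _), Nat.succ_sub le_rfl, Nat.sub_self,
      pow_one, moebius_apply_prime hp, moebius_apply_one]
    ring
  · rw [mem_range] at hi
    rw [Nat.pow_div (by omega) hp.pos, moebius_apply_prime_pow hp (by omega),
      if_neg (by omega), zero_mul]

theorem aperiodicWordCount_mul_of_coprime {m t : ℕ} (hmt : m.Coprime t) (a : ℤ) :
    aperiodicWordCount a (m * t) = ∑ y ∈ t.divisors, μ (t / y) * aperiodicWordCount (a ^ y) m := by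
  rw [aperiodicWordCount, hmt.sum_divisors_mul_eq_sum_sum, sum_comm]
  refine sum_congr rfl fun y hy => ?_
  rw [aperiodicWordCount, mul_sum]
  refine sum_congr rfl fun x hx => ?_
  have hxm := Nat.dvd_of_mem_divisors hx
  have hyt := Nat.dvd_of_mem_divisors hy
  have hcop : (m / x).Coprime (t / y) :=
    (hmt.coprime_dvd_left (Nat.div_dvd_of_dvd hxm)).coprime_dvd_right (Nat.div_dvd_of_dvd hyt)
  rw [← Nat.div_mul_div_comm hxm hyt, isMultiplicative_moebius.map_mul_of_coprime hcop, pow_mul']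
  ring

theorem prime_pow_dvd_aperiodicWordCount {p t : ℕ} (hp : p.Prime) (hpt : ¬p ∣ t) (a : ℤ)
    (k : ℕ) : (p : ℤ) ^ k ∣ aperiodicWordCount a (p ^ k * t) := by
  cases k with
  | zero => simp
  | succ k =>
    rw [aperiodicWordCount_mul_of_coprime (((hp.coprime_iff_not_dvd).mpr hpt).pow_left _)]
    refine dvd_sum fun y _ => dvd_mul_of_dvd_right ?_ _
    rw [aperiodicWordCount_prime_pow_succ hp]
    exact prime_pow_succ_dvd_pow_sub_pow hp _ k

theorem natCast_dvd_aperiodicWordCount (a : ℤ) (n : ℕ) : (n : ℤ) ∣ aperiodicWordCount a n := by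
  rcases eq_or_ne n 0 with rfl | hn
  · simp [aperiodicWordCount]
  rw [Int.natCast_dvd, Nat.dvd_iff_prime_pow_dvd_dvd]
  intro p k hp hpk
  obtain ⟨e, t, hpt, rfl⟩ := Nat.exists_eq_pow_mul_and_not_dvd hn p hp.ne_one
  have hke : p ^ k ∣ p ^ e :=
    (((hp.coprime_iff_not_dvd).mpr hpt).pow_left k).dvd_of_dvd_mul_right hpk
  rw [← Int.natCast_dvd]
  exact (Int.natCast_dvd_natCast.mpr hke).trans
    (by exact_mod_cast prime_pow_dvd_aperiodicWordCount hp hpt a e)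

theorem aperiodicWordCount_nonneg {a : ℤ} (ha : 2 ≤ a) (n : ℕ) : 0 ≤ aperiodicWordCount a n := by
  rcases eq_or_ne n 0 with rfl | hn
  · simp [aperiodicWordCount]
  lift a to ℕ using (by omega)
  have hgeom : ∑ d ∈ n.properDivisors, (a : ℤ) ^ d < (a : ℤ) ^ n := by
    exact_mod_cast Nat.geomSum_lt (by omega) fun d hd => (Nat.mem_properDivisors.mp hd).2
  have hterm : ∀ d ∈ n.properDivisors, -((a : ℤ) ^ d) ≤ μ (n / d) * (a : ℤ) ^ d := fun d _ =>
    neg_le_of_abs_le <| by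
      rw [abs_mul, abs_of_nonneg (by positivity : (0 : ℤ) ≤ (a : ℤ) ^ d)]
      exact mul_le_of_le_one_left (by positivity) abs_moebius_le_one
  have hlower := sum_le_sum hterm
  rw [sum_neg_distrib] at hlower
  rw [aperiodicWordCount, ← Nat.cons_self_properDivisors hn, sum_cons,
    Nat.div_self (Nat.pos_of_ne_zero hn), moebius_apply_one, one_mul]
  linarith

theorem Int.exists_nat_eq_mul_of_dvd_of_nonneg {m : ℕ} {z : ℤ} (hdvd : (m : ℤ) ∣ z)
    (hz : 0 ≤ z) : ∃ n : ℕ, z = m * n := by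
  lift z to ℕ using hz
  obtain ⟨n, rfl⟩ := Int.natCast_dvd_natCast.mp hdvd
  exact ⟨n, by push_cast; rfl⟩

open ArithmeticFunction ArithmeticFunction.Moebius in
theorem hecke7_count_nonneg_integer_general (e : ℕ) (h3 : 3 ∣ e) :
    ∃ n : ℕ,
      3 * ∑ f ∈ e.divisors.filter (3 ∣ ·), (μ (e / f) * (2 ^ (2 * f) - 2) : ℤ)
        = e * n := by
  obtain ⟨m, rfl⟩ := h3
  have hsum : ∑ f ∈ (3 * m).divisors.filter (3 ∣ ·), (μ (3 * m / f) * (2 ^ (2 * f) - 2) : ℤ)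
      = aperiodicWordCount 64 m - 2 * aperiodicWordCount 1 m := by
    rw [Nat.filter_dvd_divisors_mul three_ne_zero, sum_map, aperiodicWordCount,
      aperiodicWordCount, mul_sum, ← sum_sub_distrib]
    refine sum_congr rfl fun g _ => ?_
    simp only [Function.Embedding.coeFn_mk, Nat.mul_div_mul_left _ _ three_pos, pow_mul]
    ring
  have hnonneg : 0 ≤ aperiodicWordCount 64 m - 2 * aperiodicWordCount 1 m := by
    rw [aperiodicWordCount_one_left]
    split_ifs with hm
    · norm_num [hm, aperiodicWordCount_one_right]
    · simpa using aperiodicWordCount_nonneg (by norm_num) m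
  obtain ⟨n, hn⟩ := Int.exists_nat_eq_mul_of_dvd_of_nonneg
    (dvd_sub (natCast_dvd_aperiodicWordCount 64 m)
      (dvd_mul_of_dvd_right (natCast_dvd_aperiodicWordCount 1 m) 2)) hnonneg
  exact ⟨n, by rw [hsum, hn]; push_cast; ring⟩

open ArithmeticFunction ArithmeticFunction.Moebius in
theorem hecke7_count_nonneg_integer (e : ℕ) (he : Odd e) (he1 : 1 < e)
    (h3 : 3 ∣ e) :
    ∃ n : ℕ,
      3 * ∑ f ∈ e.divisors.filter (3 ∣ ·), (μ (e / f) * (2 ^ (2 * f) - 2) : ℤ)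
        = e * n :=
  hecke7_count_nonneg_integer_general e h3
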